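/- Let a₄, a₆, M, N and A₁, A₂, A₃, C₁, C₂, C₃ be integers with gcd(Aᵢ, Cᵢ) = 1 for each i, set C := C₁C₂C₃, and assume the identity of polynomials in ℤ[x]: (C₁²x − A₁)(C₂²x − A₂)(C₃²x − A₃) = C²(x³ + a₄x + a₆) − (Mx + N)². Then for every permutation {i, j, k} of {1, 2, 3}, the product CᵢCⱼ divides AᵢAⱼM + AᵢCⱼ²N + AⱼCᵢ²N. -/

import Mathlib

/-!
Comparing the coefficients of `x²`, `x` and `1` in the identity gives three Vieta-type
relations. Substituting them for `M²`, `2MN` and `N²` in the square of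
`K = A₁A₂M + A₁C₂²N + A₂C₁²N` exhibits `K²` as an explicit multiple of `(C₁C₂)²`, and over `ℤ`
divisibility of squares descends to the bases. The identity is symmetric in the three
factors, which gives the other two pairs.
-/

open Polynomial

theorem coeff_eqs_of_line_identity {R : Type*} [CommRing R] {a₄ a₆ M N A₁ A₂ A₃ C₁ C₂ C₃ : R}
    (h : (C (C₁ ^ 2) * X - C A₁) * (C (C₂ ^ 2) * X - C A₂) * (C (C₃ ^ 2) * X - C A₃)
      = C ((C₁ * C₂ * C₃) ^ 2) * (X ^ 3 + C a₄ * X + C a₆) - (C M * X + C N) ^ 2) :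
    A₁ * C₂ ^ 2 * C₃ ^ 2 + A₂ * C₁ ^ 2 * C₃ ^ 2 + A₃ * C₁ ^ 2 * C₂ ^ 2 = M ^ 2 ∧
    A₁ * A₂ * C₃ ^ 2 + A₁ * A₃ * C₂ ^ 2 + A₂ * A₃ * C₁ ^ 2 = (C₁ * C₂ * C₃) ^ 2 * a₄ - 2 * M * N ∧
    A₁ * A₂ * A₃ = N ^ 2 - (C₁ * C₂ * C₃) ^ 2 * a₆ := by
  have expand : (C (C₁ ^ 2) * X - C A₁) * (C (C₂ ^ 2) * X - C A₂) * (C (C₃ ^ 2) * X - C A₃)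
      - (C ((C₁ * C₂ * C₃) ^ 2) * (X ^ 3 + C a₄ * X + C a₆) - (C M * X + C N) ^ 2)
      = C (N ^ 2 - (C₁ * C₂ * C₃) ^ 2 * a₆ - A₁ * A₂ * A₃)
        + C (A₁ * A₂ * C₃ ^ 2 + A₁ * A₃ * C₂ ^ 2 + A₂ * A₃ * C₁ ^ 2
          - ((C₁ * C₂ * C₃) ^ 2 * a₄ - 2 * M * N)) * X
        + C (M ^ 2 - (A₁ * C₂ ^ 2 * C₃ ^ 2 + A₂ * C₁ ^ 2 * C₃ ^ 2 + A₃ * C₁ ^ 2 * C₂ ^ 2))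
          * X ^ 2 := by
    simp only [C_mul, C_add, C_sub, C_pow, C_ofNat]
    ring
  rw [h, sub_self] at expand
  have h₀ := congrArg (coeff · 0) expand.symm
  have h₁ := congrArg (coeff · 1) expand.symm
  have h₂ := congrArg (coeff · 2) expand.symm
  simp only [coeff_add, coeff_C, coeff_C_mul_X, coeff_C_mul_X_pow, coeff_zero] at h₀ h₁ h₂
  norm_num at h₀ h₁ h₂
  exact ⟨(sub_eq_zero.1 h₂).symm, sub_eq_zero.1 h₁, (sub_eq_zero.1 h₀).symm⟩

theorem sq_dvd_sq_of_coeff_eqs {R : Type*} [CommRing R] {a₄ a₆ M N A₁ A₂ A₃ C₁ C₂ C₃ : R}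
    (h₂ : A₁ * C₂ ^ 2 * C₃ ^ 2 + A₂ * C₁ ^ 2 * C₃ ^ 2 + A₃ * C₁ ^ 2 * C₂ ^ 2 = M ^ 2)
    (h₁ : A₁ * A₂ * C₃ ^ 2 + A₁ * A₃ * C₂ ^ 2 + A₂ * A₃ * C₁ ^ 2
      = (C₁ * C₂ * C₃) ^ 2 * a₄ - 2 * M * N)
    (h₀ : A₁ * A₂ * A₃ = N ^ 2 - (C₁ * C₂ * C₃) ^ 2 * a₆) :
    (C₁ * C₂) ^ 2 ∣ (A₁ * A₂ * M + A₁ * C₂ ^ 2 * N + A₂ * C₁ ^ 2 * N) ^ 2 :=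
  ⟨A₁ ^ 2 * A₂ ^ 2 * A₃ + (A₁ ^ 2 * A₂ * C₂ ^ 2 + A₁ * A₂ ^ 2 * C₁ ^ 2) * C₃ ^ 2 * a₄
      + (A₁ * C₂ ^ 2 + A₂ * C₁ ^ 2) ^ 2 * C₃ ^ 2 * a₆, by
    linear_combination -(A₁ ^ 2 * A₂ ^ 2) * h₂
      + (A₁ ^ 2 * A₂ * C₂ ^ 2 + A₁ * A₂ ^ 2 * C₁ ^ 2) * h₁ - (A₁ * C₂ ^ 2 + A₂ * C₁ ^ 2) ^ 2 * h₀⟩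

theorem dvd_of_line_identity {a₄ a₆ M N A₁ A₂ A₃ C₁ C₂ C₃ : ℤ}
    (h : (C (C₁ ^ 2) * X - C A₁) * (C (C₂ ^ 2) * X - C A₂) * (C (C₃ ^ 2) * X - C A₃)
      = C ((C₁ * C₂ * C₃) ^ 2) * (X ^ 3 + C a₄ * X + C a₆) - (C M * X + C N) ^ 2) :
    C₁ * C₂ ∣ A₁ * A₂ * M + A₁ * C₂ ^ 2 * N + A₂ * C₁ ^ 2 * N := by
  obtain ⟨h₂, h₁, h₀⟩ := coeff_eqs_of_line_identity h
  exact (Int.pow_dvd_pow_iff two_ne_zero).1 (sq_dvd_sq_of_coeff_eqs h₂ h₁ h₀)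

open Polynomial in
theorem stmt_8_general (a₄ a₆ M N A₁ A₂ A₃ C₁ C₂ C₃ : ℤ)
    (Cp : ℤ) (hCp : Cp = C₁ * C₂ * C₃)
    (hline : (C (C₁ ^ 2) * X - C A₁) * (C (C₂ ^ 2) * X - C A₂) * (C (C₃ ^ 2) * X - C A₃)
      = C (Cp ^ 2) * (X ^ 3 + C a₄ * X + C a₆) - (C M * X + C N) ^ 2) :
    C₁ * C₂ ∣ A₁ * A₂ * M + A₁ * C₂ ^ 2 * N + A₂ * C₁ ^ 2 * N ∧
    C₁ * C₃ ∣ A₁ * A₃ * M + A₁ * C₃ ^ 2 * N + A₃ * C₁ ^ 2 * N ∧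
    C₂ * C₃ ∣ A₂ * A₃ * M + A₂ * C₃ ^ 2 * N + A₃ * C₂ ^ 2 * N := by
  subst hCp
  refine ⟨dvd_of_line_identity hline,
    dvd_of_line_identity (a₄ := a₄) (a₆ := a₆) (A₃ := A₂) (C₃ := C₂) ?_,
    dvd_of_line_identity (a₄ := a₄) (a₆ := a₆) (A₃ := A₁) (C₃ := C₁) ?_⟩
  · rw [show C₁ * C₃ * C₂ = C₁ * C₂ * C₃ by ring, ← hline]; ring
  · rw [show C₂ * C₃ * C₁ = C₁ * C₂ * C₃ by ring, ← hline]; ring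

open Polynomial in
/-- Divisibility condition (8) of Lemma 2.7: for every permutation `{i, j, k}` of
`{1, 2, 3}`, `CᵢCⱼ ∣ AᵢAⱼM + AᵢCⱼ²N + AⱼCᵢ²N` (the expression is symmetric in `i, j`,
so the three stated divisibilities cover all six permutations). -/
theorem stmt_8 (a₄ a₆ M N A₁ A₂ A₃ C₁ C₂ C₃ : ℤ)
    (h₁ : Int.gcd A₁ C₁ = 1) (h₂ : Int.gcd A₂ C₂ = 1) (h₃ : Int.gcd A₃ C₃ = 1)
    (Cp : ℤ) (hCp : Cp = C₁ * C₂ * C₃)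
    (hline : (C (C₁ ^ 2) * X - C A₁) * (C (C₂ ^ 2) * X - C A₂) * (C (C₃ ^ 2) * X - C A₃)
      = C (Cp ^ 2) * (X ^ 3 + C a₄ * X + C a₆) - (C M * X + C N) ^ 2) :
    C₁ * C₂ ∣ A₁ * A₂ * M + A₁ * C₂ ^ 2 * N + A₂ * C₁ ^ 2 * N ∧
    C₁ * C₃ ∣ A₁ * A₃ * M + A₁ * C₃ ^ 2 * N + A₃ * C₁ ^ 2 * N ∧
    C₂ * C₃ ∣ A₂ * A₃ * M + A₂ * C₃ ^ 2 * N + A₃ * C₂ ^ 2 * N :=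
  stmt_8_general a₄ a₆ M N A₁ A₂ A₃ C₁ C₂ C₃ Cp hCp hline
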